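/- In G_{2r} = ⟨a, b : ab = ba⁻¹, b^{2r} = 1⟩, let m, n be positive integers, let 0 < k, l < r, and set d = gcd(2l, 2k-1). Then ⟨a^m b^{2l}, a^n b^{2k-1}⟩ = ⟨a^m, a^n b^d⟩. -/
import Mathlib


/-- Relations for `G_{2r} = ⟨a, b : b⁻¹ a b = a⁻¹, b^{2r} = 1⟩`. -/
def GRels (r : ℕ) : Set (FreeGroup (Fin 2)) :=
  {(FreeGroup.of 1)⁻¹ * FreeGroup.of 0 * FreeGroup.of 1 * FreeGroup.of 0,
   (FreeGroup.of 1) ^ (2 * r)}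

/-- The group `G_{2r}`. -/
abbrev GGrp (r : ℕ) := PresentedGroup (GRels r)

/-- The generator `a` of `G_{2r}`. -/
def ga (r : ℕ) : GGrp r := PresentedGroup.of 0

/-- The generator `b` of `G_{2r}`. -/
def gb (r : ℕ) : GGrp r := PresentedGroup.of 1

section generic
variable {G : Type*} [Group G]

lemma anti_inv_left {c u : G} (h : c * u = u⁻¹ * c) : c⁻¹ * u = u⁻¹ * c⁻¹ := by
  have := congrArg (·⁻¹) h
  simp only [mul_inv_rev, inv_inv] at this
  rw [eq_comm] at this
  exact this

lemma anti_inv_right {c u : G} (h : c * u = u⁻¹ * c) : c * u⁻¹ = u * c := by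
  calc c * u⁻¹ = u * (c * u) * u⁻¹ * u⁻¹ * u := by rw [h]; group
    _ = u * c := by group

lemma trail {c u v : G} (h : c * u = v * c) : ∀ x : G, c * (u * x) = v * (c * x) := by
  intro x; rw [← mul_assoc, h, mul_assoc]

end generic

lemma grel1 (r : ℕ) : gb r * ga r = (ga r)⁻¹ * gb r := by
  have h : ((FreeGroup.of 1)⁻¹ * FreeGroup.of 0 * FreeGroup.of 1 * FreeGroup.of 0 : FreeGroup (Fin 2)) ∈ Subgroup.normalClosure (GRels r) :=
    Subgroup.subset_normalClosure (Or.inl rfl)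
  have h2 : PresentedGroup.mk (GRels r) ((FreeGroup.of 1)⁻¹ * FreeGroup.of 0 * FreeGroup.of 1 * FreeGroup.of 0) = 1 :=
    (QuotientGroup.eq_one_iff _).2 h
  simp only [map_mul, map_inv] at h2
  have h3 : (gb r)⁻¹ * ga r * gb r * ga r = 1 := h2
  calc gb r * ga r = (ga r)⁻¹ * gb r * ((gb r)⁻¹ * ga r * gb r * ga r) := by group
    _ = (ga r)⁻¹ * gb r := by rw [h3, mul_one]

lemma gcomm2 (r : ℕ) : Commute (ga r) (gb r ^ 2) := by
  have h := grel1 r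
  have h2 := anti_inv_right h
  unfold Commute SemiconjBy
  calc ga r * gb r ^ 2 = (ga r * gb r) * gb r := by rw [pow_two, ← mul_assoc]
    _ = (gb r * (ga r)⁻¹) * gb r := by rw [← h2]
    _ = gb r * ((ga r)⁻¹ * gb r) := by group
    _ = gb r * (gb r * ga r) := by rw [← h]
    _ = gb r ^ 2 * ga r := by rw [pow_two, mul_assoc]

lemma gcomm_even (r s i : ℕ) : Commute (ga r ^ i) (gb r ^ (2*s)) := by
  have : gb r ^ (2*s) = (gb r ^ 2) ^ s := by rw [← pow_mul]
  rw [this]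
  exact (gcomm2 r).pow_pow i s

lemma swap_even (r s i : ℕ) : gb r ^ (2*s) * ga r ^ i = ga r ^ i * gb r ^ (2*s) :=
  ((gcomm_even r s i).symm).eq

lemma swap_even_inv (r s i : ℕ) : gb r ^ (2*s) * (ga r ^ i)⁻¹ = (ga r ^ i)⁻¹ * gb r ^ (2*s) :=
  ((gcomm_even r s i).inv_left.symm).eq

lemma swap_odd_one (r e : ℕ) (he : Odd e) : gb r ^ e * ga r = (ga r)⁻¹ * gb r ^ e := by
  obtain ⟨s, hs⟩ := he
  subst hs
  have h1 : gb r ^ (2*s+1) = gb r ^ (2*s) * gb r := by rw [pow_succ]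
  have hc : gb r ^ (2*s) * (ga r)⁻¹ = (ga r)⁻¹ * gb r ^ (2*s) := by
    have hco := (gcomm_even r s 1).inv_left
    rw [pow_one] at hco
    exact hco.symm.eq
  rw [h1, mul_assoc, grel1 r, ← mul_assoc, hc, mul_assoc]

lemma swap_odd (r e i : ℕ) (he : Odd e) : gb r ^ e * ga r ^ i = (ga r ^ i)⁻¹ * gb r ^ e := by
  induction i with
  | zero => simp
  | succ j ih =>
    rw [pow_succ, ← mul_assoc, ih, mul_assoc, swap_odd_one r e he, ← mul_assoc, mul_inv_rev]
    group

/-- `(a^i b^e)^2 = b^e b^e` for odd `e`. -/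
lemma sq_odd (r i e : ℕ) (he : Odd e) :
    (ga r ^ i * gb r ^ e) * (ga r ^ i * gb r ^ e) = gb r ^ e * gb r ^ e := by
  rw [mul_assoc, trail (swap_odd r e i he), mul_inv_cancel_left]

/-- `(a^j b^e) (a^i b^{2s}) (a^j b^e)⁻¹ (a^i b^{2s}) = b^{2s} b^{2s}` for odd `e`. -/
lemma conj_sq (r i j s e : ℕ) (he : Odd e) :
    (ga r ^ j * gb r ^ e) * (ga r ^ i * gb r ^ (2*s)) * (ga r ^ j * gb r ^ e)⁻¹ *
      (ga r ^ i * gb r ^ (2*s)) = gb r ^ (2*s) * gb r ^ (2*s) := by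
  have T1 := trail (swap_odd r e i he)
  have T1' := trail (swap_odd r e j he)
  have T2 := trail (anti_inv_right (swap_odd r e i he))
  have T2' := trail (anti_inv_right (swap_odd r e j he))
  have T3 := trail (anti_inv_left (swap_odd r e i he))
  have T3' := trail (anti_inv_left (swap_odd r e j he))
  have T4 := trail (anti_inv_right (anti_inv_left (swap_odd r e i he)))
  have T4' := trail (anti_inv_right (anti_inv_left (swap_odd r e j he)))
  have T5 := trail (swap_even r s i)
  have T5' := trail (swap_even r s j)
  have T6 := trail (swap_even_inv r s i)
  have T6' := trail (swap_even_inv r s j)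
  have N3 := anti_inv_left (swap_odd r e i he)
  have N3' := anti_inv_left (swap_odd r e j he)
  have N4 := anti_inv_right (anti_inv_left (swap_odd r e i he))
  have N4' := anti_inv_right (anti_inv_left (swap_odd r e j he))
  simp only [mul_inv_rev, mul_assoc]
  simp only [T1, T1', T2, T2', T3, T3', T4, T4', T5, T5', T6, T6',
    swap_odd r e i he, swap_odd r e j he, swap_even r s i, swap_even r s j,
    swap_even_inv r s i, swap_even_inv r s j, N3, N3', N4, N4',
    anti_inv_right (swap_odd r e i he), anti_inv_right (swap_odd r e j he)]
  group

/-- in `G_{2r}`, for `m, n ≥ 1` and `0 < k, l < r`, with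
`d = gcd(2l, 2k-1)`, one has `⟨a^m b^{2l}, a^n b^{2k-1}⟩ = ⟨a^m, a^n b^d⟩`. -/
theorem closure_mixed_generators_eq (r m n k l d : ℕ) (hm : 1 ≤ m) (hn : 1 ≤ n)
    (hk : 0 < k) (hkr : k < r) (hl : 0 < l) (hlr : l < r)
    (hd : d = Nat.gcd (2 * l) (2 * k - 1)) :
    Subgroup.closure {ga r ^ m * gb r ^ (2 * l), ga r ^ n * gb r ^ (2 * k - 1)} =
      Subgroup.closure {ga r ^ m, ga r ^ n * gb r ^ d} := by
  have he : Odd (2*k-1) := ⟨k-1, by omega⟩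
  have hdvd : d ∣ 2*k-1 := hd ▸ Nat.gcd_dvd_right _ _
  have hdvd2l : d ∣ 2*l := hd ▸ Nat.gcd_dvd_left _ _
  have hdodd : Odd d := by
    rcases Nat.even_or_odd d with hev | hod
    · exfalso
      obtain ⟨c, hc⟩ := (dvd_trans hev.two_dvd hdvd)
      omega
    · exact hod
  have hdpos : 0 < d := by rw [hd]; exact Nat.gcd_pos_of_pos_right _ (by omega)
  have hdl : d ∣ l := by
    refine (Nat.Coprime.dvd_of_dvd_mul_left ?_ hdvd2l)
    exact hdodd.coprime_two_right
  have hmul : d * ((2*k-1)/d) = 2*k-1 := Nat.mul_div_cancel' hdvd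
  obtain ⟨t2, ht2⟩ : Odd ((2*k-1)/d) := by
    have hdt : Odd (d * ((2*k-1)/d)) := by rw [hmul]; exact he
    exact (Nat.odd_mul.mp hdt).2
  have hsplit : 2*k-1 = d + 2*d*t2 := by rw [← hmul, ht2]; ring
  have hll : 2*d*(l/d) = 2*l := by rw [mul_assoc, Nat.mul_div_cancel' hdl]
  -- key equalities
  have ueq : (ga r ^ n * gb r ^ d) * (ga r ^ n * gb r ^ d) = gb r ^ (2*d) := by
    rw [sq_odd r n d hdodd, ← pow_add]
    congr 1
    omega
  have yeq : ga r ^ n * gb r ^ (2*k-1) = (ga r ^ n * gb r ^ d) * (gb r ^ (2*d))^t2 := by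
    rw [hsplit, ← pow_mul, pow_add, ← mul_assoc]
  have b2leq : gb r ^ (2*l) = (gb r ^ (2*d))^(l/d) := by
    rw [← pow_mul, hll]
  apply le_antisymm
  · rw [Subgroup.closure_le]
    rintro g (rfl | rfl)
    · -- x = a^m b^{2l} ∈ K
      have hu : ga r ^ n * gb r ^ d ∈ Subgroup.closure {ga r ^ m, ga r ^ n * gb r ^ d} :=
        Subgroup.subset_closure (by simp)
      have ham : ga r ^ m ∈ Subgroup.closure {ga r ^ m, ga r ^ n * gb r ^ d} :=
        Subgroup.subset_closure (by simp)
      have hb2d : gb r ^ (2*d) ∈ Subgroup.closure {ga r ^ m, ga r ^ n * gb r ^ d} :=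
        ueq ▸ mul_mem hu hu
      have hb2l : gb r ^ (2*l) ∈ Subgroup.closure {ga r ^ m, ga r ^ n * gb r ^ d} :=
        b2leq ▸ pow_mem hb2d (l/d)
      exact SetLike.mem_coe.2 (mul_mem ham hb2l)
    · -- y ∈ K
      have hu : ga r ^ n * gb r ^ d ∈ Subgroup.closure {ga r ^ m, ga r ^ n * gb r ^ d} :=
        Subgroup.subset_closure (by simp)
      have hb2d : gb r ^ (2*d) ∈ Subgroup.closure {ga r ^ m, ga r ^ n * gb r ^ d} :=
        ueq ▸ mul_mem hu hu
      exact SetLike.mem_coe.2 (yeq ▸ mul_mem hu (pow_mem hb2d t2))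
  · rw [Subgroup.closure_le]
    set H := Subgroup.closure {ga r ^ m * gb r ^ (2 * l), ga r ^ n * gb r ^ (2 * k - 1)} with hH
    have hx : ga r ^ m * gb r ^ (2*l) ∈ H := Subgroup.subset_closure (by simp)
    have hy : ga r ^ n * gb r ^ (2*k-1) ∈ H := Subgroup.subset_closure (by simp)
    have hy2 : gb r ^ (2*(2*k-1)) ∈ H := by
      have heq : (ga r ^ n * gb r ^ (2*k-1)) * (ga r ^ n * gb r ^ (2*k-1)) = gb r ^ (2*(2*k-1)) := by
        rw [sq_odd r n (2*k-1) he, ← pow_add]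
        congr 1
        omega
      exact heq ▸ mul_mem hy hy
    have hb4l : gb r ^ (4*l) ∈ H := by
      have heq := conj_sq r m n l (2*k-1) he
      have heq2 : gb r ^ (2*l) * gb r ^ (2*l) = gb r ^ (4*l) := by
        rw [← pow_add]; congr 1; omega
      rw [heq2] at heq
      exact heq ▸ mul_mem (mul_mem (mul_mem hy hx) (inv_mem hy)) hx
    have hb2d : gb r ^ (2*d) ∈ H := by
      set A := Nat.gcdA (2*l) (2*k-1) with hA
      set B := Nat.gcdB (2*l) (2*k-1) with hB
      have hbez : (d : ℤ) = (2*l : ℕ) * A + ((2*k-1 : ℕ) : ℤ) * B := by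
        rw [hd]; exact_mod_cast Nat.gcd_eq_gcd_ab (2*l) (2*k-1)
      have key : (gb r : GGrp r) ^ (2*d) = (gb r ^ (4*l)) ^ A * (gb r ^ (2*(2*k-1))) ^ B := by
        have e1 : ((gb r : GGrp r) ^ (4*l)) ^ A = gb r ^ (((4*l : ℕ) : ℤ) * A) := by
          rw [← zpow_natCast (gb r) (4*l), ← zpow_mul]
        have e2 : ((gb r : GGrp r) ^ (2*(2*k-1))) ^ B = gb r ^ (((2*(2*k-1) : ℕ) : ℤ) * B) := by
          rw [← zpow_natCast (gb r) (2*(2*k-1)), ← zpow_mul]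
        rw [e1, e2, ← zpow_add, ← zpow_natCast (gb r) (2*d)]
        congr 1
        push_cast at hbez ⊢
        linear_combination 2 * hbez
      rw [key]
      exact mul_mem (Subgroup.zpow_mem H hb4l A) (Subgroup.zpow_mem H hy2 B)
    have hb2l : gb r ^ (2*l) ∈ H := b2leq ▸ pow_mem hb2d (l/d)
    rintro g (rfl | rfl)
    · -- a^m ∈ H
      have : ga r ^ m = (ga r ^ m * gb r ^ (2*l)) * (gb r ^ (2*l))⁻¹ :=
        (mul_inv_cancel_right _ _).symm
      rw [this]
      exact SetLike.mem_coe.2 (mul_mem hx (inv_mem hb2l))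
    · -- u = a^n b^d ∈ H
      have : ga r ^ n * gb r ^ d = (ga r ^ n * gb r ^ (2*k-1)) * ((gb r ^ (2*d))^t2)⁻¹ := by
        rw [yeq, mul_inv_cancel_right]
      rw [this]
      exact SetLike.mem_coe.2 (mul_mem hy (inv_mem (pow_mem hb2d t2)))
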